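/- Let n be a positive natural number, α ∈ (0,1), and let C be a real symmetric positive definite n×n matrix with spectral decomposition C = U · diag(δ_1,…,δ_n) · Uᵀ, where U is orthogonal and all δ_k > 0. Define the objective J(Σ) = log(det Σ) + tr(Σ⁻¹ C) + α·(tr Σ − log(det Σ) − n) on real symmetric positive definite n×n matrices Σ. Set λ_k = √(((1−α)/(2α))² + δ_k/α) − (1−α)/(2α) for each k, and Σ* = U · diag(λ_1,…,λ_n) · Uᵀ. Then Σ* is symmetric positive definite and J(Σ*) ≤ J(Σ) for every real symmetric positive definite n×n matrix Σ. -/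

import Mathlib

/-!
Each `λ_k` is the positive root of `α x² + (1 - α) x = δ_k`, so `C = (1 - α) Σ* + α Σ*²`.
With this, `J S - J Σ*` is `1 - α` times the LogDet divergence
`log det S - log det Σ* + tr (Σ* S⁻¹) - n` plus `α` times
`tr S + tr (Σ* S⁻¹ Σ*) - 2 tr Σ* = tr ((Σ* - S) S⁻¹ (Σ* - S))`.
The second term is the trace of a positive semidefinite matrix; the first is nonnegative by
`log x ≤ x - 1` applied to the eigenvalues of `R S⁻¹ Rᵀ`, where `Σ* = Rᵀ R`.
-/

open Matrix
open scoped MatrixOrder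

namespace Matrix.PosDef

variable {ι : Type*} [Fintype ι] [DecidableEq ι] {A B : Matrix ι ι ℝ}

theorem log_det_le_trace_sub_card (hA : A.PosDef) :
    Real.log A.det ≤ A.trace - Fintype.card ι := by
  have hev := hA.eigenvalues_pos
  rw [hA.isHermitian.det_eq_prod_eigenvalues, hA.isHermitian.trace_eq_sum_eigenvalues]
  simp only [RCLike.ofReal_real_eq_id, id_eq]
  rw [Real.log_prod fun i _ => (hev i).ne', Fintype.card_eq_sum_ones, Nat.cast_sum,
    Nat.cast_one, ← Finset.sum_sub_distrib]
  exact Finset.sum_le_sum fun i _ => Real.log_le_sub_one_of_pos (hev i)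

theorem log_det_sub_log_det_le (hA : A.PosDef) (hB : B.PosDef) :
    Real.log A.det - Real.log B.det ≤ (A * B⁻¹).trace - Fintype.card ι := by
  obtain ⟨R, rfl⟩ := CStarAlgebra.nonneg_iff_eq_star_mul_self.mp hA.posSemidef.nonneg
  have hR : IsUnit R := by
    have := (isUnit_iff_isUnit_det _).mp hA.isUnit
    rw [det_mul] at this
    exact (isUnit_iff_isUnit_det R).mpr (isUnit_of_mul_isUnit_right this)
  have hM : (R * B⁻¹ * Rᴴ).PosDef :=
    hB.inv.mul_mul_conjTranspose_same (vecMul_injective_iff_isUnit.mpr hR)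
  have hdet : (R * B⁻¹ * Rᴴ).det = (star R * R).det / B.det := by
    simp only [det_mul, det_nonsing_inv, det_conjTranspose, star_eq_conjTranspose, star_trivial,
      Ring.inverse_eq_inv', div_eq_mul_inv]
    ring
  have htrace : (R * B⁻¹ * Rᴴ).trace = (star R * R * B⁻¹).trace := by
    rw [trace_mul_cycle, star_eq_conjTranspose]
  have := hM.log_det_le_trace_sub_card
  rwa [hdet, Real.log_div hA.det_pos.ne' hB.det_pos.ne', htrace] at this

theorem two_mul_trace_le (hB : B.PosDef) (P : Matrix ι ι ℝ) :
    2 * P.trace ≤ B.trace + (P * B⁻¹ * Pᵀ).trace := by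
  have hsq : (P - B) * B⁻¹ * (P - B)ᵀ = P * B⁻¹ * Pᵀ - P - Pᵀ + B := by
    have hBt : Bᵀ = B := hB.isHermitian
    have hBdet : IsUnit B.det := hB.det_pos.ne'.isUnit
    rw [transpose_sub, hBt, sub_mul, sub_mul, mul_sub, mul_sub,
      nonsing_inv_mul_cancel_right _ _ hBdet, mul_nonsing_inv _ hBdet, Matrix.one_mul,
      Matrix.one_mul]
    abel
  have := (hB.inv.posSemidef.mul_mul_conjTranspose_same (P - B)).trace_nonneg
  rw [conjTranspose_eq_transpose_of_trivial, hsq] at this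
  simp only [trace_add, trace_sub, trace_transpose] at this
  linarith

end Matrix.PosDef

namespace Matrix

variable {ι : Type*} [Fintype ι] [DecidableEq ι] {U : Matrix ι ι ℝ}

theorem posDef_mul_diagonal_mul_transpose (hU : Uᵀ * U = 1) {d : ι → ℝ} (hd : ∀ i, 0 < d i) :
    (U * diagonal d * Uᵀ).PosDef := by
  have hUunit : IsUnit U := (isUnit_iff_isUnit_det U).mpr (isUnit_det_of_left_inverse hU)
  simpa [conjTranspose_eq_transpose_of_trivial] using
    (posDef_diagonal_iff.mpr hd).mul_mul_conjTranspose_same (vecMul_injective_iff_isUnit.mpr hUunit)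

theorem mul_diagonal_mul_transpose_eq_smul_add_smul_mul_self (hU : Uᵀ * U = 1) (a b : ℝ)
    (d : ι → ℝ) :
    U * diagonal (fun i => a * d i + b * d i ^ 2) * Uᵀ =
      a • (U * diagonal d * Uᵀ) + b • (U * diagonal d * Uᵀ * (U * diagonal d * Uᵀ)) := by
  have hsq :
      U * diagonal d * Uᵀ * (U * diagonal d * Uᵀ) = U * diagonal (fun i => d i ^ 2) * Uᵀ := by
    simp only [Matrix.mul_assoc]
    rw [← Matrix.mul_assoc Uᵀ U, hU, Matrix.one_mul, ← Matrix.mul_assoc (diagonal d),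
      diagonal_mul_diagonal]
    simp only [sq]
  have hdiag : diagonal (fun i => a * d i + b * d i ^ 2) =
      a • diagonal d + b • diagonal (fun i => d i ^ 2) := by
    rw [← diagonal_smul, ← diagonal_smul, diagonal_add]
    rfl
  rw [hdiag, hsq, Matrix.mul_add, Matrix.add_mul, Matrix.mul_smul, Matrix.smul_mul,
    Matrix.mul_smul, Matrix.smul_mul]

end Matrix

noncomputable def robustEigenvalue (α d : ℝ) : ℝ :=
  √(((1 - α) / (2 * α)) ^ 2 + d / α) - (1 - α) / (2 * α)

theorem robustEigenvalue_pos {α d : ℝ} (hα : 0 < α) (hd : 0 < d) : 0 < robustEigenvalue α d := by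
  set a := (1 - α) / (2 * α)
  have : a < √(a ^ 2 + d / α) :=
    calc a ≤ |a| := le_abs_self a
      _ = √(a ^ 2) := (Real.sqrt_sq_eq_abs a).symm
      _ < √(a ^ 2 + d / α) := Real.sqrt_lt_sqrt (sq_nonneg a) (by simp [div_pos hd hα])
  exact sub_pos.mpr this

theorem robustEigenvalue_quadratic {α d : ℝ} (hα : 0 < α) (hd : 0 ≤ d) :
    (1 - α) * robustEigenvalue α d + α * robustEigenvalue α d ^ 2 = d := by
  unfold robustEigenvalue
  set a := (1 - α) / (2 * α)
  set s := √(a ^ 2 + d / α)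
  have hs : s ^ 2 = a ^ 2 + d / α := Real.sq_sqrt (by positivity)
  have ha : 1 - α = 2 * α * a := by simp only [a]; field_simp
  have hd' : α * (d / α) = d := mul_div_cancel₀ d hα.ne'
  linear_combination (s - a) * ha + α * hs + hd'

section RobustCovariance

variable {ι : Type*} [Fintype ι] [DecidableEq ι]

noncomputable def robustObjective (α : ℝ) (C S : Matrix ι ι ℝ) : ℝ :=
  Real.log S.det + (S⁻¹ * C).trace + α * (S.trace - Real.log S.det - Fintype.card ι)

theorem robustObjective_le_of_eq_smul_add_smul_mul_self {α : ℝ} (hα₀ : 0 ≤ α) (hα₁ : α ≤ 1)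
    {C P S : Matrix ι ι ℝ} (hP : P.PosDef) (hC : C = (1 - α) • P + α • (P * P))
    (hS : S.PosDef) : robustObjective α C P ≤ robustObjective α C S := by
  have htraceP : (P⁻¹ * C).trace = (1 - α) * Fintype.card ι + α * P.trace := by
    have hPdet : IsUnit P.det := hP.det_pos.ne'.isUnit
    rw [hC, Matrix.mul_add, Matrix.mul_smul, Matrix.mul_smul, nonsing_inv_mul _ hPdet,
      nonsing_inv_mul_cancel_left _ _ hPdet]
    simp
  have htraceS : (S⁻¹ * C).trace = (1 - α) * (P * S⁻¹).trace + α * (P * S⁻¹ * P).trace := by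
    rw [hC, Matrix.mul_add, Matrix.mul_smul, Matrix.mul_smul, trace_add, trace_smul, trace_smul,
      trace_mul_comm S⁻¹ P, trace_mul_cycle', ← Matrix.mul_assoc, smul_eq_mul, smul_eq_mul]
  have hlogDet := hP.log_det_sub_log_det_le hS
  have htrace := hS.two_mul_trace_le P
  rw [show Pᵀ = P from hP.isHermitian] at htrace
  unfold robustObjective
  rw [htraceP, htraceS]
  linarith [mul_le_mul_of_nonneg_left hlogDet (sub_nonneg.mpr hα₁),
    mul_le_mul_of_nonneg_left htrace hα₀]

end RobustCovariance

theorem robust_covariance_closed_form_general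
    (n : ℕ) (α : ℝ) (hα : α ∈ Set.Ioo (0 : ℝ) 1)
    (C U : Matrix (Fin n) (Fin n) ℝ) (δ : Fin n → ℝ)
    (hU : Uᵀ * U = 1) (hδ : ∀ k, 0 < δ k)
    (hdec : C = U * Matrix.diagonal δ * Uᵀ) :
    let J : Matrix (Fin n) (Fin n) ℝ → ℝ := fun S =>
      Real.log S.det + (S⁻¹ * C).trace + α * (S.trace - Real.log S.det - (n : ℝ))
    let lam : Fin n → ℝ := fun k =>
      Real.sqrt (((1 - α) / (2 * α)) ^ 2 + δ k / α) - (1 - α) / (2 * α)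
    let Sstar : Matrix (Fin n) (Fin n) ℝ := U * Matrix.diagonal lam * Uᵀ
    Sstar.PosDef ∧ ∀ S : Matrix (Fin n) (Fin n) ℝ, S.PosDef → J Sstar ≤ J S := by
  intro J lam Sstar
  obtain ⟨hα₀, hα₁⟩ := hα
  have hSstar : Sstar.PosDef :=
    posDef_mul_diagonal_mul_transpose hU fun k => robustEigenvalue_pos hα₀ (hδ k)
  have hδ_eq : δ = fun k => (1 - α) * lam k + α * lam k ^ 2 :=
    funext fun k => (robustEigenvalue_quadratic hα₀ (hδ k).le).symm
  have hC : C = (1 - α) • Sstar + α • (Sstar * Sstar) := by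
    rw [hdec, hδ_eq]
    exact mul_diagonal_mul_transpose_eq_smul_add_smul_mul_self hU _ _ _
  refine ⟨hSstar, fun S hS => ?_⟩
  simpa only [robustObjective, Fintype.card_fin] using
    robustObjective_le_of_eq_smul_add_smul_mul_self hα₀.le hα₁.le hSstar hC hS

/-- Closed-form minimizer of the regularized maximum likelihood covariance estimation
problem `J(Σ) = log det Σ + tr(Σ⁻¹ C) + α·(tr Σ − log det Σ − n)` over symmetric
positive definite matrices: if `C = U diag(δ) Uᵀ` with `U` orthogonal and `δ_k > 0`,
then `Σ* = U diag(λ) Uᵀ` with `λ_k = √(((1−α)/(2α))² + δ_k/α) − (1−α)/(2α)` is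
symmetric positive definite and minimizes `J`. -/
theorem robust_covariance_closed_form
    (n : ℕ) (hn : 0 < n) (α : ℝ) (hα : α ∈ Set.Ioo (0 : ℝ) 1)
    (C U : Matrix (Fin n) (Fin n) ℝ) (δ : Fin n → ℝ)
    (hC : C.PosDef) (hU : Uᵀ * U = 1) (hδ : ∀ k, 0 < δ k)
    (hdec : C = U * Matrix.diagonal δ * Uᵀ) :
    let J : Matrix (Fin n) (Fin n) ℝ → ℝ := fun S =>
      Real.log S.det + (S⁻¹ * C).trace + α * (S.trace - Real.log S.det - (n : ℝ))
    let lam : Fin n → ℝ := fun k =>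
      Real.sqrt (((1 - α) / (2 * α)) ^ 2 + δ k / α) - (1 - α) / (2 * α)
    let Sstar : Matrix (Fin n) (Fin n) ℝ := U * Matrix.diagonal lam * Uᵀ
    Sstar.PosDef ∧ ∀ S : Matrix (Fin n) (Fin n) ℝ, S.PosDef → J Sstar ≤ J S :=
  robust_covariance_closed_form_general n α hα C U δ hU hδ hdec
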